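/- arXiv:2010.13475 — 6 statements merged into one kernel-verified Lean document; each statement's English description precedes it below -/
import Mathlib

section
/- For every integer n ≥ 1, the center of the group U_{6n} is the cyclic subgroup generated by a², i.e., Z(U_{6n}) = ⟨a²⟩ = {a^{2s} : 0 ≤ s ≤ n−1}, a subgroup of order n. -/
/-! An element `(l, r)` of a semidirect product `N ⋊ G` of abelian groups is central exactly when
`r` acts trivially and `l` is fixed by every automorphism in the action. In `U_{6n}` the generator
`a` inverts `ZMod 3`, which fixes only `1`, and `a ^ m` acts trivially exactly when `m` is even.
So the center is `⟨a²⟩`, and `a²` has order `2n / 2 = n`. -/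

/-- The inversion automorphism of `Multiplicative (ZMod 3)` (i.e. `b ↦ b⁻¹`). -/
def negAut : MulAut (Multiplicative (ZMod 3)) := MulEquiv.inv (Multiplicative (ZMod 3))

lemma negAut_sq : negAut * negAut = 1 := by
  ext x
  simp [negAut]

/-- The action of `ZMod (2*n)` on `Multiplicative (ZMod 3)`, where the generator acts
by inversion (negation). -/
def U6nAct (n : ℕ) : Multiplicative (ZMod (2 * n)) →* MulAut (Multiplicative (ZMod 3)) :=
  AddMonoidHom.toMultiplicativeLeft
    (ZMod.lift (2 * n) ⟨zmultiplesHom _ (Additive.ofMul negAut), by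
      show ((2 * n : ℕ) : ℤ) • Additive.ofMul negAut = 0
      have : negAut ^ (2 * n) = 1 := by
        rw [pow_mul, pow_two, negAut_sq, one_pow]
      rw [← zpow_natCast negAut, Nat.cast_mul] at this
      rw [show ((2 * n : ℕ) : ℤ) • Additive.ofMul negAut
            = Additive.ofMul (negAut ^ ((2 * n : ℕ) : ℤ)) from rfl]
      rw [Nat.cast_mul, this]; rfl⟩)

/-- The group `U_{6n} = ⟨a, b | a^(2n) = b³ = 1, a⁻¹ b a = b⁻¹⟩`, realized as the
semidirect product `(ZMod 3) ⋊ (ZMod (2n))` where the generator of `ZMod (2n)` acts by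
negation. -/
abbrev U6n (n : ℕ) := SemidirectProduct (Multiplicative (ZMod 3))
    (Multiplicative (ZMod (2 * n))) (U6nAct n)

/-- The generator `a` of `U_{6n}`, of order `2n`. -/
def Ua (n : ℕ) : U6n n := SemidirectProduct.inr (Multiplicative.ofAdd 1)

/-- The generator `b` of `U_{6n}`, of order `3`. -/
def Ub (n : ℕ) : U6n n := SemidirectProduct.inl (Multiplicative.ofAdd 1)

/-- The non-commuting graph of `U_{6n}`: vertices are the non-central elements, two
distinct vertices are adjacent iff they do not commute. -/
def ncGraph (n : ℕ) : SimpleGraph {x : U6n n // x ∉ Subgroup.center (U6n n)} where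
  Adj u v := u.val * v.val ≠ v.val * u.val
  symm := ⟨fun _ _ h => fun e => h e.symm⟩
  loopless := ⟨fun _ h => h rfl⟩

namespace SemidirectProduct

variable {N G : Type*} [CommGroup N] [CommGroup G] {φ : G →* MulAut N}

theorem mem_center_iff {x : N ⋊[φ] G} :
    x ∈ Subgroup.center (N ⋊[φ] G) ↔ φ x.right = 1 ∧ ∀ g, φ g x.left = x.left := by
  rw [Subgroup.mem_center_iff]
  constructor
  · intro hx
    refine ⟨MulEquiv.ext fun m => ?_, fun g => ?_⟩
    · have := congrArg left (hx (inl m))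
      simp only [mul_left, left_inl, right_inl, map_one, MulAut.one_apply] at this
      simpa [mul_comm m] using this.symm
    · simpa using congrArg left (hx (inr g))
  · rintro ⟨hright, hleft⟩ y
    ext
    · simp [hright, hleft, mul_comm]
    · simp [mul_comm]

end SemidirectProduct

open SemidirectProduct

theorem U6nAct_ofAdd_intCast (n : ℕ) (m : ℤ) :
    U6nAct n (Multiplicative.ofAdd (m : ZMod (2 * n))) = negAut ^ m :=
  congrArg Additive.toMul (ZMod.lift_coe (2 * n) _ m)

theorem orderOf_negAut : orderOf negAut = 2 :=
  orderOf_eq_prime (by rw [sq, negAut_sq]) fun h => by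
    have := DFunLike.congr_fun h (Multiplicative.ofAdd 1)
    simp only [negAut, MulEquiv.inv_apply, MulAut.one_apply] at this
    exact absurd this (by decide)

theorem negAut_zpow_eq_one_iff {m : ℤ} : negAut ^ m = 1 ↔ Even m := by
  rw [← orderOf_dvd_iff_zpow_eq_one, orderOf_negAut, even_iff_two_dvd, Nat.cast_ofNat]

theorem U6nAct_fixes_iff (n : ℕ) {y : Multiplicative (ZMod 3)} :
    (∀ g, U6nAct n g y = y) ↔ y = 1 := by
  refine ⟨fun h => ?_, fun h g => by rw [h, map_one]⟩
  have hinv := h (Multiplicative.ofAdd ((1 : ℤ) : ZMod (2 * n)))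
  rw [U6nAct_ofAdd_intCast, zpow_one] at hinv
  exact (by decide : ∀ y : Multiplicative (ZMod 3), y⁻¹ = y → y = 1) y hinv

theorem Ua_zpow (n : ℕ) (m : ℤ) :
    Ua n ^ m = inr (Multiplicative.ofAdd (m : ZMod (2 * n))) := by
  rw [Ua, ← map_zpow, ← ofAdd_zsmul, zsmul_one]

theorem center_U6n (n : ℕ) : Subgroup.center (U6n n) = Subgroup.zpowers (Ua n ^ 2) := by
  have hsq : Ua n ^ 2 = Ua n ^ (2 : ℤ) := by norm_cast
  apply le_antisymm
  · intro x hx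
    rw [mem_center_iff, U6nAct_fixes_iff] at hx
    obtain ⟨hright, hleft⟩ := hx
    obtain ⟨m, hm⟩ : ∃ m : ℤ, Multiplicative.ofAdd (m : ZMod (2 * n)) = x.right :=
      (Multiplicative.ofAdd.surjective.comp ZMod.intCast_surjective) x.right
    rw [← hm, U6nAct_ofAdd_intCast, negAut_zpow_eq_one_iff] at hright
    obtain ⟨k, rfl⟩ := hright
    refine Subgroup.mem_zpowers_iff.mpr ⟨k, ?_⟩
    rw [hsq, ← zpow_mul, Ua_zpow, ← inl_left_mul_inr_right x, hleft, map_one, one_mul, ← hm,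
      two_mul k]
  · rw [Subgroup.zpowers_le, hsq, Ua_zpow, mem_center_iff, right_inr, left_inr,
      U6nAct_ofAdd_intCast, negAut_zpow_eq_one_iff]
    exact ⟨even_two, fun g => by simp⟩

theorem orderOf_Ua (n : ℕ) : orderOf (Ua n) = 2 * n := by
  rw [Ua, orderOf_injective _ inr_injective, orderOf_ofAdd_eq_addOrderOf, ZMod.addOrderOf_one]

/-- The center of `U_{6n}` is the cyclic subgroup generated by `a²`, which consists of the
elements `a^(2s)` for `0 ≤ s ≤ n-1`, and has order `n`. -/
theorem U6n_center (n : ℕ) (hn : 1 ≤ n) :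
    Subgroup.center (U6n n) = Subgroup.zpowers (Ua n ^ 2) ∧
    (Subgroup.center (U6n n) : Set (U6n n)) = {x | ∃ s < n, x = Ua n ^ (2 * s)} ∧
    Nat.card (Subgroup.center (U6n n)) = n := by
  classical
  have horder : orderOf (Ua n ^ 2) = n := by
    rw [orderOf_pow_of_dvd two_ne_zero (by simp [orderOf_Ua]), orderOf_Ua]
    omega
  have hfin : IsOfFinOrder (Ua n ^ 2) := orderOf_pos_iff.mp (by omega)
  refine ⟨center_U6n n, ?_, by rw [center_U6n, Nat.card_zpowers, horder]⟩
  ext x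
  simp [center_U6n, hfin.mem_zpowers_iff_mem_range_orderOf, horder, pow_mul, eq_comm]
end

section
/- For every integer n ≥ 1 and every r with 0 ≤ r ≤ n−1, the centralizer of a^{2r+1}b in U_{6n} is C_{U_{6n}}(a^{2r+1}b) = {a^{2s} : 0 ≤ s ≤ n−1} ∪ {a^{2s+1}b : 0 ≤ s ≤ n−1}, a subgroup of order 2n. -/
/-! From `b a = a b⁻¹` one gets `(a b)² = a²`, so `a b` has order `2n` and its powers are exactly
the elements `a^(2s)` and `a^(2s+1) b`; in particular `a^(2r+1) b = (a b)^(2r+1)`, and `⟨a b⟩` lies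
in its centralizer `C`. Since `⟨a b⟩` has prime index `3` and `b ∉ C` (otherwise `b² = 1`),
`C = ⟨a b⟩`. -/

namespace Subgroup

variable {G : Type*} [Group G] {H K : Subgroup G}

theorem eq_of_le_of_index_prime (hHK : H ≤ K) (hp : H.index.Prime) (hK : K ≠ ⊤) : K = H := by
  rw [← relIndex_mul_index hHK, Nat.prime_mul_iff, index_eq_one] at hp
  obtain ⟨-, hKH⟩ | ⟨-, hrel⟩ := hp
  · exact absurd hKH hK
  · exact le_antisymm (relIndex_eq_one.mp hrel) hHK

end Subgroup

section

variable {G : Type*} [Group G] {a b : G}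

theorem commute_sq_of_mul_eq_mul_inv (h : b * a = a * b⁻¹) : Commute b (a ^ 2) := by
  have h' : b⁻¹ * a = a * b := by
    rw [inv_mul_eq_iff_eq_mul, ← mul_assoc, h, inv_mul_cancel_right]
  show b * a ^ 2 = a ^ 2 * b
  rw [sq, ← mul_assoc, h, mul_assoc, h', ← mul_assoc]

theorem mul_pow_two_mul_of_mul_eq_mul_inv (h : b * a = a * b⁻¹) (s : ℕ) :
    (a * b) ^ (2 * s) = a ^ (2 * s) := by
  have hsq : (a * b) ^ 2 = a ^ 2 := by
    rw [sq, sq, mul_assoc, ← mul_assoc b, h, mul_assoc, inv_mul_cancel, mul_one]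
  rw [pow_mul, pow_mul, hsq]

theorem mul_pow_two_mul_add_one_of_mul_eq_mul_inv (h : b * a = a * b⁻¹) (s : ℕ) :
    (a * b) ^ (2 * s + 1) = a ^ (2 * s + 1) * b := by
  rw [pow_succ, mul_pow_two_mul_of_mul_eq_mul_inv h, ← mul_assoc, pow_succ]

theorem sq_eq_one_of_commute_pow_odd_mul (h : b * a = a * b⁻¹) {s : ℕ}
    (hc : Commute b (a ^ (2 * s + 1) * b)) : b ^ 2 = 1 := by
  have hodd : b * a ^ (2 * s + 1) = a ^ (2 * s + 1) * b⁻¹ := by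
    rw [pow_succ, ← mul_assoc, pow_mul, ((commute_sq_of_mul_eq_mul_inv h).pow_right s).eq,
      mul_assoc, h, mul_assoc]
  have := hc.eq
  rw [← mul_assoc, hodd, inv_mul_cancel_right, mul_assoc, left_eq_mul] at this
  rw [sq, this]

theorem zpowers_mul_eq_of_mul_eq_mul_inv (h : b * a = a * b⁻¹) {n : ℕ}
    (hn : 0 < n) (hab : orderOf (a * b) = 2 * n) :
    (Subgroup.zpowers (a * b) : Set G) =
      {x | ∃ s < n, x = a ^ (2 * s)} ∪ {x | ∃ s < n, x = a ^ (2 * s + 1) * b} := by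
  classical
  have hfin : IsOfFinOrder (a * b) := orderOf_pos_iff.mp (by omega)
  ext x
  simp only [SetLike.mem_coe, hfin.mem_zpowers_iff_mem_range_orderOf, hab, Finset.mem_image,
    Finset.mem_range, Set.mem_union, Set.mem_ofPred_eq]
  constructor
  · rintro ⟨k, hk, rfl⟩
    obtain ⟨s, rfl | rfl⟩ := Nat.even_or_odd' k
    · exact .inl ⟨s, by omega, mul_pow_two_mul_of_mul_eq_mul_inv h s⟩
    · exact .inr ⟨s, by omega, mul_pow_two_mul_add_one_of_mul_eq_mul_inv h s⟩
  · rintro (⟨s, hs, rfl⟩ | ⟨s, hs, rfl⟩)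
    · exact ⟨2 * s, by omega, mul_pow_two_mul_of_mul_eq_mul_inv h s⟩
    · exact ⟨2 * s + 1, by omega, mul_pow_two_mul_add_one_of_mul_eq_mul_inv h s⟩

end

open SemidirectProduct

theorem U6nAct_ofAdd_one (n : ℕ) : U6nAct n (Multiplicative.ofAdd 1) = negAut := by
  rw [U6nAct, AddMonoidHom.toMultiplicativeLeft_apply_apply, toAdd_ofAdd, ← Int.cast_one,
    ZMod.lift_coe]
  simp

theorem Ub_mul_Ua (n : ℕ) : Ub n * Ua n = Ua n * (Ub n)⁻¹ := by
  ext <;> simp [Ua, Ub, mul_left, mul_right, inv_left, U6nAct_ofAdd_one, negAut]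

theorem Ub_sq_ne_one (n : ℕ) : Ub n ^ 2 ≠ 1 := by
  rw [Ub, ← map_pow, ← map_one inl, inl_injective.ne_iff]
  decide

theorem orderOf_Ua_mul_Ub (n : ℕ) : orderOf (Ua n * Ub n) = 2 * n := by
  apply Nat.dvd_antisymm
  · apply orderOf_dvd_of_pow_eq_one
    rw [mul_pow_two_mul_of_mul_eq_mul_inv (Ub_mul_Ua n)]
    exact orderOf_dvd_iff_pow_eq_one.mp (dvd_of_eq (orderOf_Ua n))
  · have := orderOf_map_dvd rightHom (Ua n * Ub n)
    rwa [map_mul, Ub, rightHom_inl, mul_one, Ua, rightHom_inr, orderOf_ofAdd_eq_addOrderOf,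
      ZMod.addOrderOf_one] at this

theorem card_U6n (n : ℕ) : Nat.card (U6n n) = 6 * n := by
  rw [SemidirectProduct.card, Nat.card_congr Multiplicative.toAdd,
    Nat.card_congr Multiplicative.toAdd, Nat.card_zmod, Nat.card_zmod]
  ring

theorem centralizer_Ua_pow_odd_mul_Ub {n r : ℕ} (hr : r < n) :
    Subgroup.centralizer {Ua n ^ (2 * r + 1) * Ub n} = Subgroup.zpowers (Ua n * Ub n) := by
  have hg : Ua n ^ (2 * r + 1) * Ub n = (Ua n * Ub n) ^ (2 * r + 1) :=
    (mul_pow_two_mul_add_one_of_mul_eq_mul_inv (Ub_mul_Ua n) r).symm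
  apply Subgroup.eq_of_le_of_index_prime
  · rw [Subgroup.zpowers_le, Subgroup.mem_centralizer_singleton_iff, hg]
    exact ((Commute.refl _).pow_right _).eq
  · have hcard := (Subgroup.zpowers (Ua n * Ub n)).index_mul_card
    rw [Nat.card_zpowers, orderOf_Ua_mul_Ub, card_U6n, show 6 * n = 3 * (2 * n) by ring] at hcard
    rw [Nat.eq_of_mul_eq_mul_right (by omega) hcard]
    exact Nat.prime_three
  · intro htop
    have hb : Ub n ∈ Subgroup.centralizer {Ua n ^ (2 * r + 1) * Ub n} := htop ▸ Subgroup.mem_top _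
    rw [Subgroup.mem_centralizer_singleton_iff] at hb
    exact Ub_sq_ne_one n (sq_eq_one_of_commute_pow_odd_mul (Ub_mul_Ua n) hb)

theorem U6n_centralizer_odd_ab_general (n : ℕ) (r : ℕ) (hr : r < n) :
    (Subgroup.centralizer {Ua n ^ (2 * r + 1) * Ub n} : Set (U6n n)) =
      {x | ∃ s < n, x = Ua n ^ (2 * s)} ∪ {x | ∃ s < n, x = Ua n ^ (2 * s + 1) * Ub n} ∧
    Nat.card (Subgroup.centralizer {Ua n ^ (2 * r + 1) * Ub n} : Subgroup (U6n n))
      = 2 * n := by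
  rw [centralizer_Ua_pow_odd_mul_Ub hr, Nat.card_zpowers, orderOf_Ua_mul_Ub]
  exact ⟨zpowers_mul_eq_of_mul_eq_mul_inv (Ub_mul_Ua n) (by omega) (orderOf_Ua_mul_Ub n), rfl⟩

/-- For `0 ≤ r ≤ n-1`, the centralizer of `a^(2r+1)·b` in `U_{6n}` is
`{a^(2s) : 0 ≤ s ≤ n-1} ∪ {a^(2s+1)·b : 0 ≤ s ≤ n-1}`, a subgroup of order `2n`. -/
theorem U6n_centralizer_odd_ab (n : ℕ) (hn : 1 ≤ n) (r : ℕ) (hr : r < n) :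
    (Subgroup.centralizer {Ua n ^ (2 * r + 1) * Ub n} : Set (U6n n)) =
      {x | ∃ s < n, x = Ua n ^ (2 * s)} ∪ {x | ∃ s < n, x = Ua n ^ (2 * s + 1) * Ub n} ∧
    Nat.card (Subgroup.centralizer {Ua n ^ (2 * r + 1) * Ub n} : Subgroup (U6n n))
      = 2 * n :=
  U6n_centralizer_odd_ab_general n r hr
end

section
/- For every integer n ≥ 1, the number of edges of the non-commuting graph Γ(U_{6n}) is 9n². -/
/-!
Every ordered pair of non-commuting elements of a group is a dart of its non-commuting graph,
so twice the number of edges is `|G|²` minus the number of commuting pairs. Writing elements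
of `U_{6n}` as `(x, k) ∈ ZMod 3 × ZMod (2n)`, the elements `(x, k)` and `(y, l)` commute iff
`(1 - (-1)^l) x = (1 - (-1)^k) y`, a linear equation over `𝔽₃` with `9` solutions `(x, y)`
when `k` and `l` are both even and `3` otherwise. Hence there are `9n² + 3 · 3n² = 18n²`
commuting pairs among the `36n²` pairs, and `9n²` edges.
-/

section NonCommutingGraph

variable (G : Type*) [Group G]

def nonCommutingGraph : SimpleGraph {x : G // x ∉ Subgroup.center G} where
  Adj u v := ¬Commute u.val v.val
  symm := ⟨fun _ _ h => fun e => h e.symm⟩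
  loopless := ⟨fun _ h => h (Commute.refl _)⟩

variable {G} in
lemma notMem_center_of_not_commute {x y : G} (h : ¬Commute x y) : x ∉ Subgroup.center G :=
  fun hx => h (Subgroup.mem_center_iff.mp hx y).symm

def nonCommutingGraph.dartEquiv :
    (nonCommutingGraph G).Dart ≃ {p : G × G // ¬Commute p.1 p.2} where
  toFun d := ⟨(d.fst.val, d.snd.val), d.adj⟩
  invFun p := ⟨(⟨p.1.1, notMem_center_of_not_commute p.2⟩,
    ⟨p.1.2, notMem_center_of_not_commute fun h => p.2 h.symm⟩), p.2⟩
  left_inv _ := rfl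
  right_inv _ := rfl

lemma nonCommutingGraph.two_mul_ncard_edgeSet_add_card_commute [Finite G] :
    2 * (nonCommutingGraph G).edgeSet.ncard + Nat.card {p : G × G // Commute p.1 p.2} =
      Nat.card G ^ 2 := by
  classical
  have := Fintype.ofFinite G
  have commuting_le := Fintype.card_subtype_le fun p : G × G => Commute p.1 p.2
  rw [Fintype.card_prod, ← sq] at commuting_le
  rw [← SimpleGraph.coe_edgeFinset, Set.ncard_coe_finset,
    ← SimpleGraph.dart_card_eq_twice_card_edges, Fintype.card_congr (dartEquiv G),
    Fintype.card_subtype_compl, Nat.card_eq_fintype_card, Nat.card_eq_fintype_card,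
    Fintype.card_prod, ← sq]
  omega

end NonCommutingGraph

section LinearEquation

variable {F : Type*} [Field F]

def solutionsEquivOfNeZero {a b : F} (hb : b ≠ 0) : {p : F × F // a * p.1 = b * p.2} ≃ F where
  toFun p := p.1.1
  invFun x := ⟨(x, b⁻¹ * (a * x)), by field_simp⟩
  left_inv p := by
    ext
    · rfl
    · simp [p.2, hb]
  right_inv _ := rfl

lemma card_solutions_mul_eq_mul [Finite F] [DecidableEq F] (a b : F) :
    Nat.card {p : F × F // a * p.1 = b * p.2} =
      if a = 0 ∧ b = 0 then Nat.card F ^ 2 else Nat.card F := by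
  by_cases hb : b = 0
  · by_cases ha : a = 0
    · subst ha hb
      simp [Nat.card_prod, sq]
    · rw [if_neg (by tauto), ← Nat.card_congr (solutionsEquivOfNeZero ha)]
      exact Nat.card_congr ((Equiv.prodComm F F).subtypeEquiv fun p => eq_comm)
  · rw [if_neg (by tauto), Nat.card_congr (solutionsEquivOfNeZero hb)]

end LinearEquation

lemma one_sub_neg_one_pow_eq_zero_iff {R : Type*} [Ring R] (h : (-1 : R) ≠ 1) (m : ℕ) :
    (1 - (-1) ^ m : R) = 0 ↔ Even m := by
  rw [sub_eq_zero, eq_comm, neg_one_pow_eq_one_iff_even h]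

section Parity

open Finset

variable {n : ℕ} [NeZero n]

lemma even_val_add_one_iff (k : ZMod (2 * n)) : Even (k + 1).val ↔ ¬Even k.val := by
  have parity (k : ZMod (2 * n)) :
      Even k.val ↔ ZMod.castHom (dvd_mul_right 2 n) (ZMod 2) k = 0 := by
    rw [ZMod.castHom_apply, ZMod.cast_eq_val, ZMod.natCast_eq_zero_iff_even]
  rw [parity, parity, map_add, map_one]
  generalize ZMod.castHom _ (ZMod 2) k = x
  revert x
  decide

lemma card_filter_even_val : #{k : ZMod (2 * n) | Even k.val} = n := by
  have shift : #{k : ZMod (2 * n) | Even k.val} = #{k : ZMod (2 * n) | ¬Even k.val} := by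
    rw [← Fintype.card_subtype, ← Fintype.card_subtype]
    exact Fintype.card_congr ((Equiv.addRight 1).subtypeEquiv fun k => by
      rw [Equiv.coe_addRight, even_val_add_one_iff, not_not])
  have total := card_filter_add_card_filter_not (s := univ) (p := fun k : ZMod (2 * n) => Even k.val)
  rw [card_univ, ZMod.card] at total
  omega

lemma card_filter_not_even_val : #{k : ZMod (2 * n) | ¬Even k.val} = n := by
  have total := card_filter_add_card_filter_not (s := univ) (p := fun k : ZMod (2 * n) => Even k.val)
  rw [card_univ, ZMod.card, card_filter_even_val] at total
  omega

lemma sum_ite_even_val_and_even_val :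
    ∑ k : ZMod (2 * n) × ZMod (2 * n), (if Even k.1.val ∧ Even k.2.val then 9 else 3) =
      18 * n ^ 2 := by
  have row (k : ZMod (2 * n)) :
      ∑ l : ZMod (2 * n), (if Even k.val ∧ Even l.val then 9 else 3) =
        if Even k.val then 12 * n else 6 * n := by
    split_ifs with hk
    · simp only [hk, true_and]
      rw [sum_ite, sum_const, sum_const, card_filter_even_val, card_filter_not_even_val,
        smul_eq_mul, smul_eq_mul]
      ring
    · simp only [hk, false_and, if_false, sum_const, card_univ, ZMod.card, smul_eq_mul]
      ring
  rw [Fintype.sum_prod_type, sum_congr rfl fun k _ => row k, sum_ite, sum_const, sum_const,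
    card_filter_even_val, card_filter_not_even_val, smul_eq_mul, smul_eq_mul]
  ring

end Parity

namespace U6n

open Multiplicative

variable {n : ℕ}

lemma act_ofAdd_one : U6nAct n (ofAdd 1) = negAut := by
  rw [U6nAct, AddMonoidHom.toMultiplicativeLeft_apply_apply, toAdd_ofAdd, ← Int.cast_one,
    ZMod.lift_coe]
  simp

lemma act_ofAdd [NeZero n] (k : ZMod (2 * n)) : U6nAct n (ofAdd k) = negAut ^ k.val := by
  conv_lhs => rw [← ZMod.natCast_zmod_val k, ← nsmul_one, ofAdd_nsmul, map_pow, act_ofAdd_one]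

lemma toAdd_negAut_pow_apply (m : ℕ) (x : ZMod 3) :
    toAdd ((negAut ^ m) (ofAdd x)) = (-1) ^ m * x := by
  induction m with
  | zero => simp
  | succ m ih => rw [pow_succ, MulAut.mul_apply, pow_succ]; simp [negAut, ← ih]

lemma commute_mk_iff [NeZero n] (x y : ZMod 3) (k l : ZMod (2 * n)) :
    Commute (⟨ofAdd x, ofAdd k⟩ : U6n n) ⟨ofAdd y, ofAdd l⟩ ↔
      (1 - (-1) ^ l.val) * x = (1 - (-1) ^ k.val) * y := by
  rw [commute_iff_eq, SemidirectProduct.ext_iff, SemidirectProduct.mul_right,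
    SemidirectProduct.mul_right, mul_comm (ofAdd k), and_iff_left rfl,
    SemidirectProduct.mul_left, SemidirectProduct.mul_left, act_ofAdd, act_ofAdd,
    ← toAdd.injective.eq_iff, toAdd_mul, toAdd_mul, toAdd_negAut_pow_apply,
    toAdd_negAut_pow_apply, toAdd_ofAdd, toAdd_ofAdd]
  constructor <;> intro h <;> linear_combination h

def pairEquiv (n : ℕ) : (ZMod (2 * n) × ZMod (2 * n)) × (ZMod 3 × ZMod 3) ≃ U6n n × U6n n where
  toFun q := (⟨ofAdd q.2.1, ofAdd q.1.1⟩, ⟨ofAdd q.2.2, ofAdd q.1.2⟩)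
  invFun p := ((toAdd p.1.right, toAdd p.2.right), (toAdd p.1.left, toAdd p.2.left))
  left_inv _ := rfl
  right_inv _ := rfl

instance [NeZero n] : Finite (U6n n) := Finite.of_equiv _ SemidirectProduct.equivProd.symm

lemma card [NeZero n] : Nat.card (U6n n) = 6 * n := by
  rw [Nat.card_congr SemidirectProduct.equivProd, Nat.card_prod, Nat.card_eq_fintype_card,
    Nat.card_eq_fintype_card, Fintype.card_multiplicative, Fintype.card_multiplicative, ZMod.card,
    ZMod.card]
  ring

lemma card_commute_pairs [NeZero n] :
    Nat.card {p : U6n n × U6n n // Commute p.1 p.2} = 18 * n ^ 2 := by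
  calc Nat.card {p : U6n n × U6n n // Commute p.1 p.2}
      = Nat.card ((k : ZMod (2 * n) × ZMod (2 * n)) ×
          {x : ZMod 3 × ZMod 3 // (1 - (-1) ^ k.2.val) * x.1 = (1 - (-1) ^ k.1.val) * x.2}) :=
        Nat.card_congr <|
          ((pairEquiv n).subtypeEquiv fun _ => (commute_mk_iff _ _ _ _).symm).symm.trans
            (Equiv.subtypeProdEquivSigmaSubtype fun k x => _)
    _ = ∑ k : ZMod (2 * n) × ZMod (2 * n), (if Even k.1.val ∧ Even k.2.val then 9 else 3) := by
        rw [Nat.card_sigma]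
        refine Finset.sum_congr rfl fun k _ => ?_
        rw [card_solutions_mul_eq_mul, Nat.card_zmod]
        simp only [one_sub_neg_one_pow_eq_zero_iff (by decide : (-1 : ZMod 3) ≠ 1), and_comm]
        norm_num
    _ = 18 * n ^ 2 := sum_ite_even_val_and_even_val

end U6n

lemma ncGraph_eq_nonCommutingGraph (n : ℕ) : ncGraph n = nonCommutingGraph (U6n n) := rfl

/-- The number of edges of the non-commuting graph of `U_{6n}` is `9n²`. -/
theorem U6n_edge_count (n : ℕ) (hn : 1 ≤ n) :
    ((ncGraph n).edgeSet).ncard = 9 * n ^ 2 := by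
  have : NeZero n := ⟨by omega⟩
  rw [ncGraph_eq_nonCommutingGraph]
  have key := nonCommutingGraph.two_mul_ncard_edgeSet_add_card_commute (U6n n)
  rw [U6n.card_commute_pairs, U6n.card] at key
  linarith
end

section
/- For every integer n ≥ 1, the non-commuting graph Γ(U_{6n}) is the complete 4-partite graph K_{n,n,n,2n} with parts Ω₁, Ω₂, Ω₃, Ω₄: two vertices u, v of Γ(U_{6n}) are adjacent if and only if u and v lie in different parts Ω_i, Ω_j (i ≠ j). -/
/-- The partition of the vertex set of the non-commuting graph of `U_{6n}` into the four
parts `Ω₁, Ω₂, Ω₃, Ω₄`. -/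
def Omega (n : ℕ) : Fin 4 → Set {x : U6n n // x ∉ Subgroup.center (U6n n)} :=
  ![{v | ∃ r < n, v.val = Ua n ^ (2 * r + 1)},
    {v | ∃ r < n, v.val = Ua n ^ (2 * r + 1) * Ub n},
    {v | ∃ r < n, v.val = Ua n ^ (2 * r + 1) * Ub n ^ 2},
    {v | ∃ r < n, ∃ k, (k = 1 ∨ k = 2) ∧ v.val = Ua n ^ (2 * r) * Ub n ^ k}]


/-!
Write `x ∈ U_{6n}` in semidirect-product coordinates `x = b^ℓ a^m`. Since `a` acts on `⟨b⟩` by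
inversion, the commutator of two elements only depends on their *signatures* `(b^ℓ, m mod 2)`,
of which there are six. Centrality (signature `(1, even)`), membership in each `Ωᵢ` and
commutation are therefore all read off the signature, and the complete 4-partite structure
becomes a finite check on signatures. The sizes of the parts come from the uniqueness of the
normal form `a^j b^k` with `j < 2n`, `k < 3`.
-/

lemma Set.ncard_setOf_exists_mem_val_eq {α ι : Type*} {p : α → Prop} {s : Set ι} {g : ι → α}
    (hg : s.InjOn g) (hp : ∀ i ∈ s, p (g i)) :
    {v : {x // p x} | ∃ i ∈ s, v.val = g i}.ncard = s.ncard := by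
  have hpre : {v : {x // p x} | ∃ i ∈ s, v.val = g i} = Subtype.val ⁻¹' (g '' s) := by
    ext v
    simp [eq_comm]
  rw [hpre, Set.ncard_preimage_of_injective_subset_range Subtype.val_injective, hg.ncard_image]
  rintro _ ⟨i, hi, rfl⟩
  exact ⟨⟨g i, hp i hi⟩, rfl⟩

lemma ZMod.natCast_injOn_Iio (m : ℕ) : (Set.Iio m).InjOn (Nat.cast : ℕ → ZMod m) :=
  fun a ha b hb h => by rw [← ZMod.val_cast_of_lt ha, h, ZMod.val_cast_of_lt hb]

lemma ZMod.even_val_iff_exists_lt {n : ℕ} [NeZero n] (m : ZMod (2 * n)) :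
    Even m.val ↔ ∃ r < n, m = 2 * r := by
  constructor
  · rintro ⟨r, hr⟩
    have := m.val_lt
    exact ⟨r, by omega, by rw [← m.natCast_zmod_val, hr]; push_cast; ring⟩
  · rintro ⟨r, hr, rfl⟩
    rw [show (2 * r : ZMod (2 * n)) = (2 * r : ℕ) by push_cast; rfl,
      ZMod.val_cast_of_lt (by omega)]
    exact even_two_mul r

lemma ZMod.odd_val_iff_exists_lt {n : ℕ} [NeZero n] (m : ZMod (2 * n)) :
    Odd m.val ↔ ∃ r < n, m = 2 * r + 1 := by
  constructor
  · rintro ⟨r, hr⟩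
    have := m.val_lt
    exact ⟨r, by omega, by rw [← m.natCast_zmod_val, hr]; push_cast; ring⟩
  · rintro ⟨r, hr, rfl⟩
    rw [show (2 * r + 1 : ZMod (2 * n)) = (2 * r + 1 : ℕ) by push_cast; rfl,
      ZMod.val_cast_of_lt (by omega)]
    exact odd_two_mul_add_one r

namespace U6n

open Multiplicative (ofAdd)

variable {n : ℕ}

def twist (e : Bool) (x : Multiplicative (ZMod 3)) : Multiplicative (ZMod 3) :=
  bif e then x else x⁻¹

lemma twist_injective (e : Bool) : Function.Injective (twist e) := by
  cases e
  · exact inv_injective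
  · exact Function.injective_id

def isEven (m : Multiplicative (ZMod (2 * n))) : Bool := decide (Even m.toAdd.val)

def signature (x : U6n n) : Multiplicative (ZMod 3) × Bool := (x.left, isEven x.right)

def TwistCommute (s t : Multiplicative (ZMod 3) × Bool) : Prop :=
  s.1 * twist s.2 t.1 = t.1 * twist t.2 s.1

instance : DecidableRel TwistCommute := fun _ _ => decEq _ _

/-- `Ω_{k+1} = a^odd b^k` for `k < 3` has left coordinate `b⁻ᵏ`; `Ω₄ = a^even {b, b²}`. -/
def partSignatures : Fin 4 → Finset (Multiplicative (ZMod 3) × Bool) :=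
  ![{(1, false)}, {((ofAdd 1)⁻¹, false)}, {((ofAdd 2)⁻¹, false)},
    {(ofAdd 1, true), (ofAdd 2, true)}]

lemma partSignatures_disjoint :
    ∀ i j, i ≠ j → Disjoint (partSignatures i) (partSignatures j) := by
  decide

lemma exists_mem_partSignatures : ∀ s, s ≠ (1, true) → ∃ i, s ∈ partSignatures i := by
  decide

lemma not_twistCommute_iff : ∀ s t, s ≠ (1, true) → t ≠ (1, true) →
    (¬ TwistCommute s t ↔
      ∃ i j, i ≠ j ∧ s ∈ partSignatures i ∧ t ∈ partSignatures j) := by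
  decide

lemma negAut_pow_apply (k : ℕ) (x : Multiplicative (ZMod 3)) :
    (negAut ^ k) x = twist (decide (Even k)) x := by
  induction k generalizing x with
  | zero => simp [twist]
  | succ k ih =>
    rw [pow_succ, MulAut.mul_apply, ih]
    cases h : decide (Even k) <;> simp_all [twist, negAut, Nat.even_add_one]

lemma U6nAct_ofAdd_intCast (k : ℤ) :
    U6nAct n (ofAdd (k : ZMod (2 * n))) = negAut ^ k := by
  simp [U6nAct, ZMod.lift_coe]

lemma isEven_ofAdd_natCast (j : ℕ) :
    isEven (ofAdd (j : ZMod (2 * n))) = decide (Even j) := by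
  simp only [isEven, toAdd_ofAdd, ZMod.val_natCast, Nat.even_iff,
    Nat.mod_mod_of_dvd _ (dvd_mul_right 2 n)]

abbrev Vertex (n : ℕ) := {x : U6n n // x ∉ Subgroup.center (U6n n)}

variable [NeZero n]

lemma U6nAct_apply (m : Multiplicative (ZMod (2 * n))) (x : Multiplicative (ZMod 3)) :
    U6nAct n m x = twist (isEven m) x := by
  have hm : m = ofAdd ((m.toAdd.val : ℤ) : ZMod (2 * n)) := by simp
  rw [hm, U6nAct_ofAdd_intCast, zpow_natCast, negAut_pow_apply, ← hm]
  rfl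

lemma mul_comm_iff (u v : U6n n) : u * v = v * u ↔ TwistCommute (signature u) (signature v) := by
  rw [SemidirectProduct.ext_iff]
  simp [U6nAct_apply, TwistCommute, signature, mul_comm u.right]

lemma Ua_pow_mul_Ub_pow (j k : ℕ) :
    Ua n ^ j * Ub n ^ k =
      ⟨twist (decide (Even j)) (ofAdd k), ofAdd (j : ZMod (2 * n))⟩ := by
  have ha : Ua n ^ j = SemidirectProduct.inr (ofAdd (j : ZMod (2 * n))) := by
    rw [Ua, ← map_pow, ← ofAdd_nsmul, nsmul_one]
  have hb : Ub n ^ k = SemidirectProduct.inl (ofAdd (k : ZMod 3)) := by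
    rw [Ub, ← map_pow, ← ofAdd_nsmul, nsmul_one]
  ext <;> simp [ha, hb, U6nAct_apply, isEven_ofAdd_natCast]

lemma eq_Ua_pow_mul_Ub_pow_iff (x : U6n n) (j k : ℕ) :
    x = Ua n ^ j * Ub n ^ k ↔
      x.left = twist (decide (Even j)) (ofAdd k) ∧ x.right.toAdd = j := by
  rw [Ua_pow_mul_Ub_pow, SemidirectProduct.ext_iff]
  rfl

lemma Ua_pow_mul_Ub_pow_injOn :
    (Set.Iio (2 * n) ×ˢ Set.Iio 3).InjOn (fun p : ℕ × ℕ => Ua n ^ p.1 * Ub n ^ p.2) := by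
  rintro ⟨j, k⟩ ⟨hj, hk⟩ ⟨j', k'⟩ ⟨hj', hk'⟩ h
  simp only [Ua_pow_mul_Ub_pow, SemidirectProduct.ext_iff] at h
  obtain rfl : j = j' := ZMod.natCast_injOn_Iio _ hj hj' h.2
  obtain rfl : k = k' := ZMod.natCast_injOn_Iio 3 hk hk' (twist_injective _ h.1)
  rfl

lemma signature_Ua_pow_mul_Ub_pow (j k : ℕ) :
    signature (Ua n ^ j * Ub n ^ k) =
      (twist (decide (Even j)) (ofAdd k), decide (Even j)) := by
  rw [Ua_pow_mul_Ub_pow, signature, isEven_ofAdd_natCast]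

lemma mem_center_iff (x : U6n n) : x ∈ Subgroup.center (U6n n) ↔ signature x = (1, true) := by
  rw [Subgroup.mem_center_iff]
  constructor
  · intro h
    have ha := (mul_comm_iff _ _).1 (h (Ua n ^ 1 * Ub n ^ 0))
    have hb := (mul_comm_iff _ _).1 (h (Ua n ^ 0 * Ub n ^ 1))
    rw [signature_Ua_pow_mul_Ub_pow] at ha hb
    revert ha hb
    generalize signature x = s
    revert s
    decide
  · intro hx g
    rw [mul_comm_iff, hx]
    generalize signature g = s
    revert s
    decide

lemma signature_val_ne (v : Vertex n) : signature v.val ≠ (1, true) :=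
  (mem_center_iff _).not.1 v.2

lemma exists_eq_Ua_odd_pow_mul_Ub_pow_iff (x : U6n n) (k : ℕ) :
    (∃ r < n, x = Ua n ^ (2 * r + 1) * Ub n ^ k) ↔
      signature x = ((ofAdd (k : ZMod 3))⁻¹, false) := by
  rw [signature, Prod.mk.injEq, isEven, decide_eq_false_iff_not, Nat.not_even_iff_odd,
    ZMod.odd_val_iff_exists_lt]
  simp [eq_Ua_pow_mul_Ub_pow_iff, twist, and_left_comm (a := _ < n)]

lemma exists_eq_Ua_even_pow_mul_Ub_pow_iff (x : U6n n) (k : ℕ) :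
    (∃ r < n, x = Ua n ^ (2 * r) * Ub n ^ k) ↔
      signature x = (ofAdd (k : ZMod 3), true) := by
  rw [signature, Prod.mk.injEq, isEven, decide_eq_true_iff, ZMod.even_val_iff_exists_lt]
  simp [eq_Ua_pow_mul_Ub_pow_iff, twist, and_left_comm (a := _ < n)]

lemma mem_Omega_iff (v : Vertex n) (i : Fin 4) :
    v ∈ Omega n i ↔ signature v.val ∈ partSignatures i := by
  fin_cases i
  · have h := exists_eq_Ua_odd_pow_mul_Ub_pow_iff v.val 0
    simp only [pow_zero, mul_one, Nat.cast_zero, ofAdd_zero, inv_one] at h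
    exact h.trans (by simp [partSignatures])
  · have h := exists_eq_Ua_odd_pow_mul_Ub_pow_iff v.val 1
    simp only [pow_one, Nat.cast_one] at h
    exact h.trans (by simp [partSignatures])
  · exact (exists_eq_Ua_odd_pow_mul_Ub_pow_iff v.val 2).trans (by simp [partSignatures])
  · change (∃ r < n, ∃ k, (k = 1 ∨ k = 2) ∧ v.val = Ua n ^ (2 * r) * Ub n ^ k) ↔ _
    have h1 := exists_eq_Ua_even_pow_mul_Ub_pow_iff v.val 1
    have h2 := exists_eq_Ua_even_pow_mul_Ub_pow_iff v.val 2
    simp only [Nat.cast_one, Nat.cast_ofNat] at h1 h2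
    simp only [or_and_right, exists_or, exists_eq_left, and_or_left, h1, h2, partSignatures]
    simp

lemma ncard_setOf_exists_eq_Ua_odd_pow_mul_Ub_pow {k : ℕ} (hk : k < 3) :
    {v : Vertex n | ∃ r < n, v.val = Ua n ^ (2 * r + 1) * Ub n ^ k}.ncard = n := by
  have hinj : (Set.Iio n).InjOn (fun r => Ua n ^ (2 * r + 1) * Ub n ^ k) := by
    intro r hr r' hr' h
    have := Ua_pow_mul_Ub_pow_injOn (n := n) (x₁ := (2 * r + 1, k)) (x₂ := (2 * r' + 1, k))
      (by simp at hr ⊢; omega) (by simp at hr' ⊢; omega) h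
    simpa using this
  have hnc : ∀ r ∈ Set.Iio n, Ua n ^ (2 * r + 1) * Ub n ^ k ∉ Subgroup.center (U6n n) := by
    intro r hr
    rw [mem_center_iff, (exists_eq_Ua_odd_pow_mul_Ub_pow_iff _ k).1 ⟨r, hr, rfl⟩]
    simp
  simpa using Set.ncard_setOf_exists_mem_val_eq hinj hnc

lemma ncard_Omega_three : (Omega n 3).ncard = 2 * n := by
  have hinj :
      (Set.Iio n ×ˢ {1, 2}).InjOn (fun p : ℕ × ℕ => Ua n ^ (2 * p.1) * Ub n ^ p.2) := by
    rintro ⟨r, k⟩ hr ⟨r', k'⟩ hr' h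
    have := Ua_pow_mul_Ub_pow_injOn (n := n) (x₁ := (2 * r, k)) (x₂ := (2 * r', k'))
      (by simp at hr ⊢; omega) (by simp at hr' ⊢; omega) h
    simpa using this
  have hnc : ∀ p ∈ Set.Iio n ×ˢ {1, 2},
      Ua n ^ (2 * p.1) * Ub n ^ p.2 ∉ Subgroup.center (U6n n) := by
    rintro ⟨r, k⟩ ⟨hr, hk⟩
    rw [mem_center_iff, (exists_eq_Ua_even_pow_mul_Ub_pow_iff _ k).1 ⟨r, hr, rfl⟩]
    rcases hk with rfl | rfl <;> decide
  have hΩ : Omega n 3 =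
      {v | ∃ p ∈ Set.Iio n ×ˢ {1, 2}, v.val = Ua n ^ (2 * p.1) * Ub n ^ p.2} := by
    ext v
    simp only [Omega, Matrix.cons_val, Set.mem_ofPred_eq, Prod.exists, Set.mem_prod, Set.mem_Iio,
      Set.mem_insert_iff, Set.mem_singleton_iff, and_assoc, exists_and_left]
  rw [hΩ, Set.ncard_setOf_exists_mem_val_eq hinj hnc, Set.ncard_prod, Set.ncard_pair (by norm_num)]
  simp [mul_comm]

end U6n

open U6n in
/-- The non-commuting graph of `U_{6n}` is the complete 4-partite graph `K_{n,n,n,2n}`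
with parts `Ω₁, Ω₂, Ω₃, Ω₄`: the parts have sizes `n, n, n, 2n`, they partition the
vertex set, and two vertices are adjacent iff they lie in different parts. -/
theorem U6n_complete_four_partite (n : ℕ) (hn : 1 ≤ n) :
    (Omega n 0).ncard = n ∧ (Omega n 1).ncard = n ∧ (Omega n 2).ncard = n ∧
    (Omega n 3).ncard = 2 * n ∧
    (∀ i j : Fin 4, i ≠ j → Disjoint (Omega n i) (Omega n j)) ∧
    (⋃ i, Omega n i) = Set.univ ∧
    (∀ u v, (ncGraph n).Adj u v ↔
      ∃ i j : Fin 4, i ≠ j ∧ u ∈ Omega n i ∧ v ∈ Omega n j) := by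
  have : NeZero n := ⟨by omega⟩
  refine ⟨?_, ?_, ncard_setOf_exists_eq_Ua_odd_pow_mul_Ub_pow (k := 2) (by norm_num),
    ncard_Omega_three, ?_, ?_, ?_⟩
  · simpa [Omega] using ncard_setOf_exists_eq_Ua_odd_pow_mul_Ub_pow (n := n) (k := 0) (by norm_num)
  · simpa [Omega] using ncard_setOf_exists_eq_Ua_odd_pow_mul_Ub_pow (n := n) (k := 1) (by norm_num)
  · intro i j hij
    refine Set.disjoint_left.2 fun v hi hj => ?_
    rw [mem_Omega_iff] at hi hj
    exact Finset.disjoint_left.1 (partSignatures_disjoint i j hij) hi hj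
  · ext v
    simp only [Set.mem_iUnion, mem_Omega_iff, Set.mem_univ, iff_true]
    exact exists_mem_partSignatures _ (signature_val_ne v)
  · intro u v
    simp only [mem_Omega_iff]
    exact (not_congr (mul_comm_iff _ _)).trans
      (not_twistCommute_iff _ _ (signature_val_ne u) (signature_val_ne v))
end

section
/- For every integer n ≥ 1, the non-commuting graph Γ(U_{6n}) contains no induced 5-cycle: there is no set S of five vertices of Γ(U_{6n}) such that the subgraph of Γ(U_{6n}) induced on S is isomorphic to the cycle C₅. -/
/-!
The commuting relation is transitive on the non-central elements of any semidirect product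
`C₃ ⋊ H` with `H` abelian: the only automorphisms of `C₃` are `1` and inversion, and two
non-central elements commute exactly when `H` acts on `C₃` through them in the same way and,
if that way is inversion, they have the same `C₃`-component. Hence the non-commuting graph of
`U_{6n}` is complete multipartite, and so are its induced subgraphs, while `C₅` is not: its
vertices `0, 2` and `2, 4` are non-adjacent but `0, 4` are adjacent.
-/

lemma mulAut_zmod_three_eq_one_or_eq_negAut (f : MulAut (Multiplicative (ZMod 3))) :
    f = 1 ∨ f = negAut := by
  have key : ∀ φ : Multiplicative (ZMod 3) → Multiplicative (ZMod 3),
      (∀ x y, φ (x * y) = φ x * φ y) → φ (Multiplicative.ofAdd 1) ≠ 1 →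
        (∀ x, φ x = x) ∨ ∀ x, φ x = x⁻¹ := by
    decide
  rcases key f (map_mul f) ((map_ne_one_iff f f.injective).2 (by decide)) with h | h
  · exact .inl (MulEquiv.ext h)
  · exact .inr (MulEquiv.ext h)

lemma negAut_ne_one : negAut ≠ 1 :=
  DFunLike.ne_iff.2 ⟨Multiplicative.ofAdd 1, by decide⟩

namespace SemidirectProduct

section CommGroup

variable {N H : Type*} [Group N] [CommGroup H] {φ : H →* MulAut N}

theorem commute_iff {g k : N ⋊[φ] H} :
    Commute g k ↔ g.left * φ g.right k.left = k.left * φ k.right g.left :=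
  ⟨congrArg left, fun h => SemidirectProduct.ext h (mul_comm _ _)⟩

theorem left_ne_one_of_notMem_center {g : N ⋊[φ] H} (hg : g ∉ Subgroup.center (N ⋊[φ] H))
    (hφ : φ g.right = 1) : g.left ≠ 1 := by
  intro hl
  refine hg (Subgroup.mem_center_iff.2 fun k => (commute_iff.2 ?_).eq.symm)
  simp [hl, hφ]

end CommGroup

variable {H : Type*} [CommGroup H] {φ : H →* MulAut (Multiplicative (ZMod 3))}

theorem commute_trans_of_notMem_center {u v w : Multiplicative (ZMod 3) ⋊[φ] H}
    (hu : u ∉ Subgroup.center _) (hv : v ∉ Subgroup.center _) (hw : w ∉ Subgroup.center _)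
    (huv : Commute u v) (hvw : Commute v w) : Commute u w := by
  have hu' := left_ne_one_of_notMem_center hu
  have hv' := left_ne_one_of_notMem_center hv
  have hw' := left_ne_one_of_notMem_center hw
  rw [commute_iff] at huv hvw ⊢
  -- `φ` takes only the values `1` and inversion, so each case is a finite check in `ZMod 3`.
  rcases mulAut_zmod_three_eq_one_or_eq_negAut (φ u.right) with h₁ | h₁ <;>
  rcases mulAut_zmod_three_eq_one_or_eq_negAut (φ v.right) with h₂ | h₂ <;>
  rcases mulAut_zmod_three_eq_one_or_eq_negAut (φ w.right) with h₃ | h₃ <;>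
  simp only [h₁, h₂, h₃, negAut_ne_one, MulAut.one_apply, IsEmpty.forall_iff,
    forall_const] at hu' hv' hw' huv hvw ⊢ <;>
  revert hu' hv' hw' huv hvw <;>
  generalize u.left = x <;> generalize v.left = y <;> generalize w.left = z <;>
  revert x y z <;> decide

end SemidirectProduct

theorem ncGraph_isCompleteMultipartite (n : ℕ) : (ncGraph n).IsCompleteMultipartite :=
  ⟨fun u v w huv hvw => not_not.2 <| SemidirectProduct.commute_trans_of_notMem_center
    u.2 v.2 w.2 (not_not.1 huv) (not_not.1 hvw)⟩

theorem cycleGraph_five_not_isCompleteMultipartite :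
    ¬ (SimpleGraph.cycleGraph 5).IsCompleteMultipartite :=
  fun h => h.trans 0 2 4 (by decide) (by decide) (by decide)

theorem U6n_no_induced_C5_general (n : ℕ) :
    ¬ ∃ S : Set {x : U6n n // x ∉ Subgroup.center (U6n n)},
      S.ncard = 5 ∧
        Nonempty ((ncGraph n).induce S ≃g SimpleGraph.cycleGraph 5) := by
  rintro ⟨S, -, ⟨e⟩⟩
  exact cycleGraph_five_not_isCompleteMultipartite <|
    (ncGraph_isCompleteMultipartite n).induce.comap e.symm.toEmbedding

/-- The non-commuting graph of `U_{6n}` contains no induced 5-cycle: no set of five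
vertices induces a subgraph isomorphic to the cycle `C₅`. -/
theorem U6n_no_induced_C5 (n : ℕ) (hn : 1 ≤ n) :
    ¬ ∃ S : Set {x : U6n n // x ∉ Subgroup.center (U6n n)},
      S.ncard = 5 ∧
        Nonempty ((ncGraph n).induce S ≃g SimpleGraph.cycleGraph 5) :=
  U6n_no_induced_C5_general n
end

section
/- For every integer n ≥ 1, the subgraph of the non-commuting graph Γ(U_{6n}) induced on the vertex set Ω₁ ∪ Ω₂ ∪ Ω₃ is 2n-regular: every vertex of this induced subgraph has degree exactly 2n in it. -/
/-! The vertices in `Ω₁ ∪ Ω₂ ∪ Ω₃` are exactly the elements `(β, α)` of `ZMod 3 ⋊ ZMod (2n)` with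
`α` odd. Every odd `α` acts on `ZMod 3` by negation, so two such elements `(β, α)`, `(β', α')`
commute iff `β - β' = β' - β`, i.e. iff `β = β'`, since `ZMod 3` has no `2`-torsion. The neighbours
of a vertex `(β, α)` are therefore the `2 · n` pairs `(β', α')` with `β' ≠ β` and `α'` odd. -/

open SemidirectProduct

theorem SemidirectProduct.ncard_setOf_left_mem_and_right_mem {N G : Type*} [Group N] [Group G]
    {φ : G →* MulAut N} (A : Set N) (B : Set G) :
    {x : N ⋊[φ] G | x.left ∈ A ∧ x.right ∈ B}.ncard = A.ncard * B.ncard := by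
  rw [← Set.ncard_prod, ← Set.ncard_preimage_of_injective_subset_range equivProd.injective
    (by simp [equivProd.surjective.range_eq])]
  rfl

theorem SemidirectProduct.commute_iff_of_right_act_eq_inv {N G : Type*} [CommGroup N]
    [CommGroup G] {φ : G →* MulAut N} {x y : N ⋊[φ] G}
    (hx : φ x.right = MulEquiv.inv N) (hy : φ y.right = MulEquiv.inv N) :
    Commute x y ↔ x.left * y.left⁻¹ = y.left * x.left⁻¹ := by
  simp [Commute, SemiconjBy, SemidirectProduct.ext_iff, hx, hy, mul_comm x.right]

theorem Multiplicative.zmod3_mul_inv_eq_mul_inv_iff (x y : Multiplicative (ZMod 3)) :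
    x * y⁻¹ = y * x⁻¹ ↔ x = y := by
  revert x y; decide

theorem U6nAct_ofAdd_natCast (n m : ℕ) :
    U6nAct n (Multiplicative.ofAdd (m : ZMod (2 * n))) = negAut ^ m := by
  rw [← Int.cast_natCast]
  simp only [U6nAct, AddMonoidHom.toMultiplicativeLeft_apply_apply, toAdd_ofAdd, ZMod.lift_coe]
  simp

theorem Ua_pow (n m : ℕ) : Ua n ^ m = inr (Multiplicative.ofAdd (m : ZMod (2 * n))) := by
  simp [Ua, ← map_pow, ← ofAdd_nsmul]

theorem Ub_pow (n k : ℕ) : Ub n ^ k = inl (Multiplicative.ofAdd (k : ZMod 3)) := by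
  simp [Ub, ← map_pow, ← ofAdd_nsmul]

theorem negAut_pow_odd (r : ℕ) : negAut ^ (2 * r + 1) = negAut := by
  rw [pow_succ, pow_mul, sq, negAut_sq, one_pow, one_mul]

theorem Ua_pow_odd_mul_Ub_pow (n r k : ℕ) :
    Ua n ^ (2 * r + 1) * Ub n ^ k =
      ⟨Multiplicative.ofAdd (-(k : ZMod 3)),
        Multiplicative.ofAdd ((2 * r + 1 : ℕ) : ZMod (2 * n))⟩ := by
  rw [Ua_pow, Ub_pow]
  ext
  · simp only [mul_left, left_inr, right_inr, left_inl, one_mul, U6nAct_ofAdd_natCast,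
      negAut_pow_odd]
    rfl
  · simp

def oddResidues (n : ℕ) : Set (Multiplicative (ZMod (2 * n))) :=
  (fun r : ℕ ↦ Multiplicative.ofAdd ((2 * r + 1 : ℕ) : ZMod (2 * n))) '' Set.Iio n

theorem ncard_oddResidues (n : ℕ) : (oddResidues n).ncard = n := by
  rw [oddResidues, Set.InjOn.ncard_image, Set.ncard_Iio_nat]
  intro r hr s hs h
  have := (ZMod.natCast_eq_natCast_iff' _ _ _).mp (Multiplicative.ofAdd.injective h)
  rw [Nat.mod_eq_of_lt (by simp at hr; omega), Nat.mod_eq_of_lt (by simp at hs; omega)] at this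
  omega

theorem U6nAct_of_mem_oddResidues {n : ℕ} {g : Multiplicative (ZMod (2 * n))}
    (hg : g ∈ oddResidues n) : U6nAct n g = negAut := by
  obtain ⟨r, -, rfl⟩ := hg
  rw [U6nAct_ofAdd_natCast, negAut_pow_odd]

theorem U6n.commute_iff_left_eq {n : ℕ} {x y : U6n n} (hx : x.right ∈ oddResidues n)
    (hy : y.right ∈ oddResidues n) : Commute x y ↔ x.left = y.left := by
  rw [commute_iff_of_right_act_eq_inv (U6nAct_of_mem_oddResidues hx)
    (U6nAct_of_mem_oddResidues hy), Multiplicative.zmod3_mul_inv_eq_mul_inv_iff]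

theorem U6n.notMem_center_of_right_mem_oddResidues {n : ℕ} {x : U6n n}
    (hx : x.right ∈ oddResidues n) : x ∉ Subgroup.center (U6n n) := by
  intro hcenter
  let y : U6n n := ⟨x.left * Multiplicative.ofAdd 1, x.right⟩
  have hyx : Commute y x := Subgroup.mem_center_iff.mp hcenter y
  simpa [y] using (U6n.commute_iff_left_eq (x := y) hx hx).mp hyx

theorem mem_Omega_union_iff {n : ℕ} (v : {x : U6n n // x ∉ Subgroup.center (U6n n)}) :
    v ∈ Omega n 0 ∪ Omega n 1 ∪ Omega n 2 ↔ v.val.right ∈ oddResidues n := by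
  constructor
  · rintro ((⟨r, hr, hv⟩ | ⟨r, hr, hv⟩) | ⟨r, hr, hv⟩)
    · exact ⟨r, hr, by rw [hv, Ua_pow]; rfl⟩
    · exact ⟨r, hr, by rw [hv, ← pow_one (Ub n), Ua_pow_odd_mul_Ub_pow]⟩
    · exact ⟨r, hr, by rw [hv, Ua_pow_odd_mul_Ub_pow]⟩
  · rintro ⟨r, hr, hv⟩
    set k := (-Multiplicative.toAdd v.val.left).val with hk
    have hv : v.val = Ua n ^ (2 * r + 1) * Ub n ^ k := by
      rw [Ua_pow_odd_mul_Ub_pow, hk, ZMod.natCast_zmod_val, neg_neg]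
      exact SemidirectProduct.ext rfl hv.symm
    have : k < 3 := ZMod.val_lt _
    interval_cases k
    · exact .inl (.inl ⟨r, hr, by rwa [pow_zero, mul_one] at hv⟩)
    · exact .inl (.inr ⟨r, hr, by rwa [pow_one] at hv⟩)
    · exact .inr ⟨r, hr, hv⟩

theorem image_val_neighborSet_induce_Omega {n : ℕ} (v : ↥(Omega n 0 ∪ Omega n 1 ∪ Omega n 2)) :
    (Subtype.val ∘ Subtype.val) ''
        ((ncGraph n).induce (Omega n 0 ∪ Omega n 1 ∪ Omega n 2)).neighborSet v =
      {x : U6n n | x.left ∈ ({v.val.val.left} : Set _)ᶜ ∧ x.right ∈ oddResidues n} := by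
  have hv := (mem_Omega_union_iff _).mp v.2
  ext x
  constructor
  · rintro ⟨w, hvw, rfl⟩
    have hw := (mem_Omega_union_iff _).mp w.2
    exact ⟨fun hleft ↦ hvw ((U6n.commute_iff_left_eq hv hw).mpr hleft.symm), hw⟩
  · rintro ⟨hleft, hx⟩
    refine ⟨⟨⟨x, U6n.notMem_center_of_right_mem_oddResidues hx⟩, (mem_Omega_union_iff _).mpr hx⟩,
      fun hvx ↦ hleft ((U6n.commute_iff_left_eq hv hx).mp hvx).symm, rfl⟩

theorem U6n_induced_regular_general (n : ℕ) :
    ∀ v, (((ncGraph n).induce (Omega n 0 ∪ Omega n 1 ∪ Omega n 2)).neighborSet v).ncard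
      = 2 * n := by
  intro v
  rw [← Set.ncard_image_of_injective _ (Subtype.val_injective.comp Subtype.val_injective),
    image_val_neighborSet_induce_Omega, ncard_setOf_left_mem_and_right_mem, ncard_oddResidues,
    Set.ncard_compl, Set.ncard_singleton]
  simp

/-- The subgraph of the non-commuting graph of `U_{6n}` induced on `Ω₁ ∪ Ω₂ ∪ Ω₃` is
`2n`-regular: every vertex of this induced subgraph has degree exactly `2n` in it. -/
theorem U6n_induced_regular (n : ℕ) (hn : 1 ≤ n) :
    ∀ v, (((ncGraph n).induce (Omega n 0 ∪ Omega n 1 ∪ Omega n 2)).neighborSet v).ncard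
      = 2 * n :=
  U6n_induced_regular_general n
end
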